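/- Let SSB_j denote the graph K_{2,j} plus an edge e_{12} joining the two vertices v_1, v_2 of the partite set of size 2. In Nim on graphs with every edge of SSB_j given weight 1 and the indicator piece starting at v_1 (or v_2), the first player has a winning strategy: removing the edge e_{12} on the first move leaves the opponent in a losing position on K_{2,j}. -/

import Mathlib

/-- A position of Nim on graphs: a symmetric non-negative integer weight
function on pairs of vertices (the weighted graph; weight-zero pairs are
non-edges) plus the location of the indicator piece. -/
structure NimPos (V : Type) where
  w : V → V → ℕ
  symm : ∀ u v, w u v = w v u
  pos : V

/-- A legal move: decrease the weight of an edge incident with the piece to a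
strictly smaller value and move the piece along it; all other weights stay. -/
def NimMove {V : Type} (p q : NimPos V) : Prop :=
  p.pos ≠ q.pos ∧
  q.w p.pos q.pos < p.w p.pos q.pos ∧
  ∀ u v, ¬((u = p.pos ∧ v = q.pos) ∨ (u = q.pos ∧ v = p.pos)) → q.w u v = p.w u v

/-- The player to move loses (the position is a 0-position): the opponent has
a winning strategy `f` answering every move. -/
inductive MoverLoses {V : Type} : NimPos V → Prop
  | intro (p : NimPos V) (f : ∀ q, NimMove p q → NimPos V)
      (hmove : ∀ q (h : NimMove p q), NimMove q (f q h))
      (hwin : ∀ q (h : NimMove p q), MoverLoses (f q h)) : MoverLoses p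

/-- The player to move wins (the position is a p-position). -/
def MoverWins {V : Type} (p : NimPos V) : Prop :=
  ∃ q, NimMove p q ∧ MoverLoses q

/-- Weights of the path on vertices `0,…,n` of `Fin (n+1)`: edge `i — i+1` has weight `ω i`. -/
def pathW (n : ℕ) (ω : ℕ → ℕ) (u v : Fin (n+1)) : ℕ :=
  if u.val + 1 = v.val then ω u.val
  else if v.val + 1 = u.val then ω v.val else 0

theorem pathW_symm (n : ℕ) (ω : ℕ → ℕ) : ∀ u v, pathW n ω u v = pathW n ω v u := by
  intro u v; unfold pathW; split_ifs <;> first | rfl | (exfalso; omega)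

/-- Weights of the cycle on `Fin m` (`m ≥ 3`): edge `i — (i+1) % m` has weight `ω i`. -/
def cycW (m : ℕ) (ω : ℕ → ℕ) (u v : Fin m) : ℕ :=
  (if (u.val + 1) % m = v.val then ω u.val else 0) +
  (if (v.val + 1) % m = u.val then ω v.val else 0)

theorem cycW_symm (m : ℕ) (ω : ℕ → ℕ) : ∀ u v, cycW m ω u v = cycW m ω v u :=
  fun _ _ => Nat.add_comm _ _

/-- Weight-1 complete bipartite graph `K_{2,j}`: part `{0,1}` and part `{2,…,j+1}`. -/
def k2W (j : ℕ) (u v : Fin (j+2)) : ℕ :=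
  if (u.val < 2 ∧ 2 ≤ v.val) ∨ (v.val < 2 ∧ 2 ≤ u.val) then 1 else 0

theorem k2W_symm (j : ℕ) : ∀ u v, k2W j u v = k2W j v u := by
  intro u v; unfold k2W; split_ifs <;> omega

/-- Weight-1 `SSB_j = K_{2,j} + e_{12}`: `K_{2,j}` plus the edge `0 — 1`. -/
def ssbW (j : ℕ) (u v : Fin (j+2)) : ℕ :=
  if ((u.val < 2 ∧ 2 ≤ v.val) ∨ (v.val < 2 ∧ 2 ≤ u.val)) ∨
      (u.val < 2 ∧ v.val < 2 ∧ u.val ≠ v.val) then 1 else 0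

theorem ssbW_symm (j : ℕ) : ∀ u v, ssbW j u v = ssbW j v u := by
  intro u v; unfold ssbW; split_ifs <;> omega

/-- Weight-1 complete graph `K_n`. -/
def knW (n : ℕ) (u v : Fin n) : ℕ := if u.val ≠ v.val then 1 else 0

theorem knW_symm (n : ℕ) : ∀ u v, knW n u v = knW n v u := by
  intro u v; unfold knW; split_ifs <;> omega

/-- Length of the maximal all-positive run of cycle edges clockwise from vertex `s`. -/
noncomputable def fwdLen (m : ℕ) (w : ℕ → ℕ) (s : ℕ) : ℕ :=
  sSup {d | d ≤ m ∧ ∀ i < d, 0 < w ((s + i) % m)}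

/-- Length of the maximal all-positive run of cycle edges counterclockwise from vertex `s`. -/
noncomputable def bwdLen (m : ℕ) (w : ℕ → ℕ) (s : ℕ) : ℕ :=
  sSup {d | d ≤ m ∧ ∀ i < d, 0 < w ((s + m - 1 - i) % m)}

/-! The second player wins on `K_{2,j}` by mirroring: swapping `v₁` and `v₂` is an automorphism
fixing every neighbour of the piece, so a move `a → m` can always be answered by `m → σ a`,
leaving the same weight on the mirror image of the edge just used. As the total weight strictly
decreases, this restores the symmetric situation until the first player is stuck. On `SSB_j`,
removing `e₁₂` is a move into exactly that situation. -/

namespace NimMove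

variable {V : Type} {p q : NimPos V}

theorem w_le (h : NimMove p q) (u v : V) : q.w u v ≤ p.w u v := by
  by_cases huv : (u = p.pos ∧ v = q.pos) ∨ (u = q.pos ∧ v = p.pos)
  · rcases huv with ⟨rfl, rfl⟩ | ⟨rfl, rfl⟩
    · exact h.2.1.le
    · rw [q.symm, p.symm]; exact h.2.1.le
  · exact (h.2.2 u v huv).le

theorem w_eq_of_ne (h : NimMove p q) {u v : V} (huv : s(u, v) ≠ s(p.pos, q.pos)) :
    q.w u v = p.w u v :=
  h.2.2 u v (by rwa [Ne, Sym2.eq_iff] at huv)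

theorem w_eq_ite [DecidableEq V] (h : NimMove p q) (u v : V) :
    q.w u v = if s(u, v) = s(p.pos, q.pos) then q.w p.pos q.pos else p.w u v := by
  split_ifs with huv
  · rcases Sym2.eq_iff.1 huv with ⟨rfl, rfl⟩ | ⟨rfl, rfl⟩
    exacts [rfl, q.symm _ _]
  · exact h.w_eq_of_ne huv

end NimMove

section Strategy

variable {V : Type} [Fintype V]

def NimPos.totalWeight (p : NimPos V) : ℕ := ∑ e : V × V, p.w e.1 e.2

theorem NimMove.totalWeight_lt {p q : NimPos V} (h : NimMove p q) :
    q.totalWeight < p.totalWeight :=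
  Finset.sum_lt_sum (fun e _ => h.w_le e.1 e.2) ⟨(p.pos, q.pos), Finset.mem_univ _, h.2.1⟩

theorem MoverLoses.of_forall_reply (P : NimPos V → Prop)
    (hreply : ∀ p q, P p → NimMove p q → ∃ r, NimMove q r ∧ P r) {p : NimPos V}
    (hp : P p) : MoverLoses p := by
  choose reply hmove hP using hreply
  induction hw : p.totalWeight using Nat.strong_induction_on generalizing p with
  | _ n ih =>
    refine MoverLoses.intro p (fun q hq => reply p q hp hq) (fun q hq => hmove p q hp hq)
      fun q hq => ih _ ?_ (hP p q hp hq) rfl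
    exact hw ▸ ((hmove p q hp hq).totalWeight_lt.trans hq.totalWeight_lt)

end Strategy

theorem Function.Involutive.sym2_eq_iff {V : Type} {σ : V → V} (hσ : Function.Involutive σ)
    {u v x y : V} :
    s(σ u, σ v) = s(x, y) ↔ s(u, v) = s(σ x, σ y) := by
  constructor <;> intro h <;> simpa only [Sym2.map_mk, hσ _] using congrArg (Sym2.map σ) h

section Mirror

variable {V : Type} [DecidableEq V] {σ : V → V}

structure NimPos.IsMirrored (σ : V → V) (p : NimPos V) : Prop where
  w_map : ∀ u v, p.w (σ u) (σ v) = p.w u v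
  map_pos_ne : σ p.pos ≠ p.pos
  map_of_adj : ∀ v, p.w p.pos v ≠ 0 → σ v = v

def NimPos.mirrorReply (σ : V → V) (p q : NimPos V) : NimPos V where
  w u v := if s(u, v) = s(q.pos, σ p.pos) then q.w p.pos q.pos else q.w u v
  symm u v := by rw [Sym2.eq_swap, q.symm u v]
  pos := σ p.pos

theorem NimPos.IsMirrored.nimMove_mirrorReply (hσ : Function.Involutive σ) {p q : NimPos V}
    (hp : p.IsMirrored σ) (hq : NimMove p q) : NimMove q (p.mirrorReply σ q) := by
  have hne := hq.1
  have hlt := hq.2.1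
  have hm : σ q.pos = q.pos := hp.map_of_adj _ (by omega)
  have hσa : σ p.pos ≠ q.pos := fun h => hne (by rw [← hσ p.pos, h, hm])
  have hfar : s(q.pos, σ p.pos) ≠ s(p.pos, q.pos) := by
    rw [Ne, Sym2.eq_iff]; rintro (⟨h, -⟩ | ⟨-, h⟩)
    exacts [hne h.symm, hp.map_pos_ne h]
  refine ⟨hσa.symm, ?_, fun u v huv => by
    dsimp only [NimPos.mirrorReply] at huv ⊢; exact if_neg (by rwa [Sym2.eq_iff])⟩
  calc
    (p.mirrorReply σ q).w q.pos (σ p.pos) = q.w p.pos q.pos := by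
      dsimp only [NimPos.mirrorReply]; exact if_pos rfl
    _ < p.w p.pos q.pos := hlt
    _ = p.w q.pos (σ p.pos) := by rw [← hp.w_map q.pos, hm, hσ, p.symm]
    _ = q.w q.pos (σ p.pos) := (hq.w_eq_of_ne hfar).symm

theorem NimPos.IsMirrored.isMirrored_mirrorReply (hσ : Function.Involutive σ) {p q : NimPos V}
    (hp : p.IsMirrored σ) (hq : NimMove p q) : (p.mirrorReply σ q).IsMirrored σ where
  w_map u v := by
    have hm : σ q.pos = q.pos := hp.map_of_adj _ (by have := hq.2.1; omega)
    dsimp only [NimPos.mirrorReply]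
    rw [hq.w_eq_ite (σ u), hq.w_eq_ite u, hp.w_map]
    simp only [hσ.sym2_eq_iff, hm, hσ _, Sym2.eq_swap (a := q.pos) (b := p.pos),
      Sym2.eq_swap (a := σ p.pos) (b := q.pos)]
    split_ifs <;> rfl
  map_pos_ne := by
    dsimp only [NimPos.mirrorReply]; rw [hσ]; exact hp.map_pos_ne.symm
  map_of_adj v hv := by
    have hle := ((hp.nimMove_mirrorReply hσ hq).w_le (σ p.pos) v).trans (hq.w_le _ v)
    have hadj : p.w p.pos (σ v) ≠ 0 := by
      rw [← hp.w_map, hσ]; dsimp only [NimPos.mirrorReply] at hv hle ⊢; omega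
    exact (hp.map_of_adj _ hadj).symm.trans (hσ v)

theorem MoverLoses.of_isMirrored [Fintype V] (hσ : Function.Involutive σ) {p : NimPos V}
    (hp : p.IsMirrored σ) : MoverLoses p :=
  MoverLoses.of_forall_reply (NimPos.IsMirrored σ)
    (fun _ _ hp hq => ⟨_, hp.nimMove_mirrorReply hσ hq, hp.isMirrored_mirrorReply hσ hq⟩) hp

end Mirror

section CompleteBipartite

variable {j : ℕ}

theorem swap_zero_one_val_lt_two_iff (u : Fin (j+2)) :
    (Equiv.swap (0 : Fin (j+2)) 1 u).val < 2 ↔ u.val < 2 := by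
  rcases eq_or_ne u 0 with rfl | h0
  · simp
  rcases eq_or_ne u 1 with rfl | h1
  · simp
  rw [Equiv.swap_apply_of_ne_of_ne h0 h1]

theorem swap_zero_one_ne_self {u : Fin (j+2)} (hu : u.val < 2) :
    Equiv.swap (0 : Fin (j+2)) 1 u ≠ u :=
  Equiv.swap_apply_ne_self_iff.2
    ⟨by simp, by simp only [Fin.ext_iff, Fin.val_zero, Fin.val_one]; omega⟩

theorem k2W_swap_zero_one (u v : Fin (j+2)) :
    k2W j (Equiv.swap 0 1 u) (Equiv.swap 0 1 v) = k2W j u v := by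
  have hu := swap_zero_one_val_lt_two_iff u
  have hv := swap_zero_one_val_lt_two_iff v
  unfold k2W; split_ifs <;> omega

theorem NimPos.isMirrored_swap_of_w_eq_k2W {p : NimPos (Fin (j+2))} (hw : p.w = k2W j)
    (hpos : p.pos.val < 2) : p.IsMirrored (Equiv.swap 0 1) where
  w_map := by rw [hw]; exact k2W_swap_zero_one
  map_pos_ne := swap_zero_one_ne_self hpos
  map_of_adj v hv := by
    have h2 : 2 ≤ v.val := by rw [hw] at hv; unfold k2W at hv; split_ifs at hv <;> omega
    exact Equiv.swap_apply_of_ne_of_ne (by rintro rfl; simp at h2) (by rintro rfl; simp at h2)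

theorem NimMove.w_eq_k2W_of_ssbW {s : Fin (j+2)} (hs : s.val < 2) {q : NimPos (Fin (j+2))}
    (hq : NimMove ⟨ssbW j, ssbW_symm j, s⟩ q) (hq2 : q.pos.val < 2) : q.w = k2W j := by
  obtain ⟨hne, hlt, hrest⟩ := hq
  dsimp only at hne hlt hrest
  simp only [Fin.ext_iff] at hne hrest
  funext u v
  by_cases h : (u.val = s.val ∧ v.val = q.pos.val) ∨ (u.val = q.pos.val ∧ v.val = s.val)
  · unfold ssbW at hlt
    rcases h with ⟨hu, hv⟩ | ⟨hu, hv⟩ <;> rw [Fin.ext hu, Fin.ext hv]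
    · unfold k2W; split_ifs at hlt ⊢ <;> omega
    · rw [q.symm]; unfold k2W; split_ifs at hlt ⊢ <;> omega
  · rw [hrest u v h]; unfold ssbW k2W; split_ifs <;> omega

theorem nimMove_ssbW_k2W {s t : Fin (j+2)} (hs : s.val < 2) (ht : t.val < 2) (hst : s ≠ t) :
    NimMove ⟨ssbW j, ssbW_symm j, s⟩ ⟨k2W j, k2W_symm j, t⟩ := by
  rw [Ne, Fin.ext_iff] at hst
  refine ⟨fun h => hst (congrArg Fin.val h), ?_, fun u v huv => ?_⟩
  · dsimp only; unfold k2W ssbW; split_ifs <;> omega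
  · dsimp only at huv ⊢; simp only [Fin.ext_iff] at huv
    unfold k2W ssbW; split_ifs <;> omega

end CompleteBipartite

/-- Nim on `SSB_j = K_{2,j} + e_{12}` with all weights 1 and the
piece starting at `v₁` or `v₂` (the size-2 part `{0,1}`): the first player
wins, and removing the edge `e_{12}` on the first move (the move whose target
is the other size-2 vertex) leaves the opponent in a losing position. -/
theorem stmt8 (j : ℕ) (s : Fin (j+2)) (hs : s.val < 2) :
    MoverWins ⟨ssbW j, ssbW_symm j, s⟩ ∧
    ∀ q, NimMove ⟨ssbW j, ssbW_symm j, s⟩ q → q.pos.val < 2 →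
      MoverLoses q := by
  have loses : ∀ q, NimMove ⟨ssbW j, ssbW_symm j, s⟩ q → q.pos.val < 2 → MoverLoses q :=
    fun q hq hq2 => MoverLoses.of_isMirrored (Equiv.swap_apply_self 0 1)
      (NimPos.isMirrored_swap_of_w_eq_k2W (hq.w_eq_k2W_of_ssbW hs hq2) hq2)
  have ht := (swap_zero_one_val_lt_two_iff s).2 hs
  have hmove := nimMove_ssbW_k2W hs ht (swap_zero_one_ne_self hs).symm
  exact ⟨⟨_, hmove, loses _ hmove ht⟩, loses⟩
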